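/- Let G be a graph with maximum degree Δ(G) = 4 and maximum average degree mad(G) < 33/10. Then χ'_inj(G) ≤ 12. -/

import Mathlib

open SimpleGraph

/-- A graph is claw-free if it has no induced subgraph isomorphic to `K_{1,3}`. -/
def ClawFree {V : Type} (G : SimpleGraph V) : Prop :=
  IsEmpty ((completeBipartiteGraph (Fin 1) (Fin 3)) ↪g G)

/-- Edge `e` sees edge `e'` if they are at distance two (share no endpoint and some
edge of `G` joins an endpoint of `e` to an endpoint of `e'`) or lie in a common triangle. -/
def Sees {V : Type} (G : SimpleGraph V) (e e' : Sym2 V) : Prop :=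
  ((∀ x ∈ e, x ∉ e') ∧ ∃ x ∈ e, ∃ y ∈ e', G.Adj x y) ∨
  (∃ x y z : V, G.Adj x y ∧ G.Adj y z ∧ G.Adj x z ∧
    e ∈ ({s(x, y), s(y, z), s(x, z)} : Set (Sym2 V)) ∧
    e' ∈ ({s(x, y), s(y, z), s(x, z)} : Set (Sym2 V)))

/-- An injective edge-coloring: distinct edges that see each other get distinct colors. -/
def IsInjEdgeColoring {V : Type} (G : SimpleGraph V) {k : ℕ}
    (φ : G.edgeSet → Fin k) : Prop :=
  ∀ e e' : G.edgeSet, (e : Sym2 V) ≠ (e' : Sym2 V) → Sees G e e' → φ e ≠ φ e'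

/-- `G` has an injective `k`-edge-coloring. -/
def HasInjColoring {V : Type} (G : SimpleGraph V) (k : ℕ) : Prop :=
  ∃ φ : G.edgeSet → Fin k, IsInjEdgeColoring G φ

/-- The injective chromatic index: the least `k` such that `G` has an injective
`k`-edge-coloring. -/
noncomputable def injChromIndex {V : Type} (G : SimpleGraph V) : ℕ :=
  sInf {k | HasInjColoring G k}

/-- `mad(G) < q`: every nonempty (induced) subgraph `H` satisfies `2|E(H)| < q * |V(H)|`. -/
def MadLt {V : Type} [Fintype V] (G : SimpleGraph V) (q : ℚ) : Prop :=
  ∀ s : Finset V, s.Nonempty →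
    (2 * ({e ∈ G.edgeSet | ∀ x ∈ e, x ∈ s}.ncard) : ℚ) < q * s.card

/-!
Colour greedily: it suffices that every nonempty set `F` of edges contains an edge seeing at
most 11 other edges of `F`. Suppose every edge of `F` sees at least 12 of them, and let `H` be
the subgraph of `G` induced by the vertices covered by `F`. An edge `uv ∈ F` only sees edges of
`F` at neighbours `x` of `u` or `v`, at most `min(3, deg_H x - 1)` at each, so the `H`-degrees
around `uv` are large: `H` has minimum degree 2, the neighbours of a 2-vertex are 4-vertices, and
so on. Call a 4-vertex strong if it has at least 3 edges of `F`. Discharging: every 2-vertex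
takes 2 from each neighbour, and every 3-vertex takes 1 in equal parts from its strong neighbours
without a 2-neighbour or, if there are none, from its `F`-neighbours of degree 4. No 4-vertex
gives more than 2, so `4 n₂ + n₃ ≤ 2 n₄`, whence `2 |E(H)| = 2 n₂ + 3 n₃ + 4 n₄ ≥ 33/10 |V(H)|`,
contradicting `mad(G) < 33/10`.
-/

open Finset

theorem exists_coloring_of_forall_exists_card_lt {α : Type*} [DecidableEq α]
    {r : α → α → Prop} [DecidableRel r] (hr : ∀ a b, r a b → r b a) {k : ℕ} [NeZero k]
    (S : Finset α)
    (h : ∀ F ⊆ S, F.Nonempty → ∃ e ∈ F, #{f ∈ F.erase e | r e f} < k) :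
    ∃ φ : α → Fin k, ∀ e ∈ S, ∀ f ∈ S, e ≠ f → r e f → φ e ≠ φ f := by
  induction S using Finset.strongInduction with
  | H S ih =>
  obtain rfl | hne := S.eq_empty_or_nonempty
  · exact ⟨0, by simp⟩
  obtain ⟨e, he, hlt⟩ := h S subset_rfl hne
  obtain ⟨φ, hφ⟩ := ih (S.erase e) (erase_ssubset he) fun F hF =>
    h F (hF.trans (erase_subset e S))
  obtain ⟨c, hc⟩ : ∃ c, c ∉ ({f ∈ S.erase e | r e f} : Finset α).image φ := by
    by_contra! hall
    have := (card_image_le (f := φ)).trans_lt hlt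
    rw [eq_univ_of_forall hall, card_univ, Fintype.card_fin] at this
    exact this.false
  have hce : ∀ f ∈ S, f ≠ e → r e f → c ≠ φ f := fun f hf hfe hef hcf =>
    hc (mem_image.2 ⟨f, mem_filter.2 ⟨mem_erase.2 ⟨hfe, hf⟩, hef⟩, hcf.symm⟩)
  refine ⟨Function.update φ e c, fun a ha b hb hab hrab => ?_⟩
  rcases eq_or_ne a e with rfl | hae
  · simpa [Function.update_of_ne hab.symm] using hce b hb hab.symm hrab
  rcases eq_or_ne b e with rfl | hbe
  · simpa [hae] using (hce a ha hae (hr _ _ hrab)).symm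
  simpa [hae, hbe] using hφ a (mem_erase.2 ⟨hae, ha⟩) b (mem_erase.2 ⟨hbe, hb⟩) hab hrab

theorem sum_le_two_mul_card_add_card_filter_eq_three {α : Type*} {s : Finset α} {f : α → ℕ}
    (h : ∀ y ∈ s, f y ≤ 3) : ∑ y ∈ s, f y ≤ 2 * #s + #{y ∈ s | f y = 3} := by
  classical
  rw [← sum_filter_add_sum_filter_not s (fun y => f y = 3),
    ← card_filter_add_card_filter_not (s := s) (fun y => f y = 3)]
  have h3 : ∑ y ∈ s with f y = 3, f y = 3 * #{y ∈ s | f y = 3} := by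
    rw [sum_congr rfl fun y hy => (mem_filter.1 hy).2, sum_const, smul_eq_mul, mul_comm]
  have h2 : ∑ y ∈ s with ¬f y = 3, f y ≤ 2 * #{y ∈ s | ¬f y = 3} := by
    rw [mul_comm, ← smul_eq_mul]
    refine sum_le_card_nsmul _ _ 2 fun y hy => ?_
    have := h y (mem_filter.1 hy).1
    have := (mem_filter.1 hy).2
    omega
  omega

theorem sum_inv_le_two {ι : Type*} [DecidableEq ι] {J K : Finset ι} {c : ι → ℕ}
    (hKJ : K ⊆ J) (hJK : #J ≤ #K + 1) (hc : ∀ z ∈ J, 1 ≤ c z)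
    (hcK : ∀ z ∈ K, #J ≤ c z + 1) :
    ∑ z ∈ J, (c z : ℚ)⁻¹ ≤ 2 := by
  have hle : ∀ z ∈ J, (c z : ℚ)⁻¹ ≤ 1 := fun z hz =>
    inv_le_one_of_one_le₀ (by exact_mod_cast hc z hz)
  rcases le_or_gt #J 2 with hJ | hJ
  · calc ∑ z ∈ J, (c z : ℚ)⁻¹ ≤ ∑ z ∈ J, 1 := sum_le_sum hle
      _ = #J := by simp
      _ ≤ 2 := by exact_mod_cast hJ
  have hJ3 : (3 : ℚ) ≤ #J := by exact_mod_cast hJ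
  set t := ((#J : ℚ) - 1)⁻¹
  have ht : ((#J : ℚ) - 1) * t = 1 := mul_inv_cancel₀ (by linarith)
  have ht2 : t ≤ 1 / 2 := by
    rw [one_div]; exact inv_anti₀ (by norm_num) (by linarith)
  have h1 : ∑ z ∈ J \ K, (c z : ℚ)⁻¹ ≤ #(J \ K) :=
    (sum_le_sum fun z hz => hle z (mem_sdiff.1 hz).1).trans (by simp)
  have hK : ∀ z ∈ K, (c z : ℚ)⁻¹ ≤ t := fun z hz => by
    have : (#J : ℚ) ≤ c z + 1 := by exact_mod_cast hcK z hz
    exact inv_anti₀ (by linarith) (by linarith)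
  have h2 : ∑ z ∈ K, (c z : ℚ)⁻¹ ≤ #K * t := (sum_le_sum hK).trans (by simp)
  rw [← sum_sdiff hKJ]
  have hKle := card_le_card hKJ
  rw [card_sdiff_of_subset hKJ] at h1
  obtain hk | hk : #K = #J ∨ #K + 1 = #J := by omega
  · rw [hk, Nat.sub_self, Nat.cast_zero] at h1
    rw [hk] at h2
    nlinarith
  · rw [← hk, Nat.add_sub_cancel_left, Nat.cast_one] at h1
    have : (#K : ℚ) = #J - 1 := by rw [← hk]; push_cast; ring
    rw [this, ht] at h2
    linarith

theorem sum_card_neighborFinset_inter {V : Type} [Fintype V] [DecidableEq V] (G : SimpleGraph V)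
    [DecidableRel G.Adj] (s : Finset V) :
    ∑ v ∈ s, #(G.neighborFinset v ∩ s) =
      2 * {e ∈ G.edgeSet | ∀ x ∈ e, x ∈ s}.ncard := by
  classical
  let H := (G.induce (s : Set V)).spanningCoe
  have hH : ∀ a b, H.Adj a b ↔ G.Adj a b ∧ a ∈ s ∧ b ∈ s := by simp [H]
  have hnbr : ∀ v,
      #(H.neighborFinset v) = if v ∈ s then #(G.neighborFinset v ∩ s) else 0 := by
    intro v
    split_ifs with hv
    · congr 1; ext w; simp [hH, hv]
    · rw [card_eq_zero]; ext w; simp [hH, hv]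
  have hedges : (H.edgeFinset : Set (Sym2 V)) = {e ∈ G.edgeSet | ∀ x ∈ e, x ∈ s} := by
    ext e
    induction e using Sym2.ind
    simp [hH]
  rw [← hedges, Set.ncard_coe_finset, ← H.sum_degrees_eq_twice_card_edges]
  simp_rw [← card_neighborFinset_eq_degree, hnbr, sum_ite_mem, univ_inter]

theorem Sees.symm {V : Type} {G : SimpleGraph V} {e f : Sym2 V} (h : Sees G e f) : Sees G f e := by
  rcases h with ⟨hdisj, x, hx, y, hy, hxy⟩ | ⟨x, y, z, hxy, hyz, hxz, he, hf⟩
  · exact .inl ⟨fun a ha hb => hdisj a hb ha, y, hy, x, hx, hxy.symm⟩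
  · exact .inr ⟨x, y, z, hxy, hyz, hxz, hf, he⟩

theorem exists_apex_of_mem_triangle {V : Type} {G : SimpleGraph V} {u v x y z : V} {f : Sym2 V}
    (hxy : G.Adj x y) (hyz : G.Adj y z) (hxz : G.Adj x z)
    (he : s(u, v) ∈ ({s(x, y), s(y, z), s(x, z)} : Set (Sym2 V)))
    (hf : f ∈ ({s(x, y), s(y, z), s(x, z)} : Set (Sym2 V))) (hfe : f ≠ s(u, v)) :
    ∃ w, G.Adj u w ∧ G.Adj v w ∧ (f = s(u, w) ∨ f = s(v, w)) := by
  have := hxy.ne; have := hyz.ne; have := hxz.ne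
  simp only [Set.mem_insert_iff, Set.mem_singleton_iff] at he hf
  rcases he with he | he | he <;> rw [Sym2.eq_iff] at he <;>
    rcases he with ⟨hu, hv⟩ | ⟨hu, hv⟩ <;> subst u v <;> rcases hf with rfl | rfl | rfl <;>
    first
    | exact (hfe rfl).elim
    | exact (hfe Sym2.eq_swap).elim
    | exact ⟨x, by grind [SimpleGraph.Adj.symm, Sym2.eq_swap]⟩
    | exact ⟨y, by grind [SimpleGraph.Adj.symm, Sym2.eq_swap]⟩
    | exact ⟨z, by grind [SimpleGraph.Adj.symm, Sym2.eq_swap]⟩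

namespace InjectiveEdgeColoring

open scoped Classical

variable {V : Type} [Fintype V]

/- `active F` is the vertex set of the induced subgraph `H` of the sketch above, and `adeg` is the
degree in `H`. -/
section Definitions

variable (G : SimpleGraph V) [DecidableRel G.Adj] (F : Finset (Sym2 V))

noncomputable def fNbrs (v : V) : Finset V := {y | s(v, y) ∈ F}

noncomputable def active : Finset V := {v | (fNbrs F v).Nonempty}

noncomputable def activeNbrs (u : V) : Finset V := G.neighborFinset u ∩ active F

noncomputable def adeg (u : V) : ℕ := #(activeNbrs G F u)

noncomputable def activeOfAdeg (k : ℕ) : Finset V := {v ∈ active F | adeg G F v = k}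

def IsStrong (x : V) : Prop := 3 ≤ #(fNbrs F x) ∧ adeg G F x = 4

/- An edge of `F` seen by `uv` is an edge `xy ∈ F` with `x` adjacent to `u` or `v`; `sideEdges u v`
collects those with `x` adjacent to `u`, and `sideWeight u v` bounds their number. -/
noncomputable def sideWeight (u v : V) : ℕ :=
  ∑ x ∈ (activeNbrs G F u).erase v, #((fNbrs F x).erase u)

noncomputable def sideEdges (u v : V) : Finset (Sym2 V) :=
  ((activeNbrs G F u).erase v).biUnion fun x => ((fNbrs F x).erase u).image (s(x, ·))

noncomputable def saturated (u v : V) : Finset V :=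
  {x ∈ (activeNbrs G F u).erase v | #((fNbrs F x).erase u) = 3}

def HasAdegTwoNbr (x : V) : Prop := ∃ z ∈ activeNbrs G F x, adeg G F z = 2

noncomputable def eligible (z : V) : Finset V :=
  {x ∈ activeNbrs G F z | IsStrong G F x ∧ ¬HasAdegTwoNbr G F x}

noncomputable def fallback (z : V) : Finset V := {u ∈ fNbrs F z | adeg G F u = 4}

noncomputable def targets (z : V) : Finset V :=
  if (eligible G F z).Nonempty then eligible G F z else fallback G F z

noncomputable def eligibleFor (x : V) : Finset V :=
  {z ∈ activeOfAdeg G F 3 | x ∈ eligible G F z}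

noncomputable def share (z x : V) : ℚ :=
  if x ∈ targets G F z then (#(targets G F z) : ℚ)⁻¹ else 0

end Definitions

variable {G : SimpleGraph V} [DecidableRel G.Adj] {F : Finset (Sym2 V)} {u v w x y z : V}

theorem mem_fNbrs : y ∈ fNbrs F v ↔ s(v, y) ∈ F := by simp [fNbrs]

theorem mem_fNbrs_comm : y ∈ fNbrs F v ↔ v ∈ fNbrs F y := by simp [mem_fNbrs, Sym2.eq_swap]

theorem mem_active : v ∈ active F ↔ (fNbrs F v).Nonempty := by simp [active]

theorem mem_active_of_mem_fNbrs (h : y ∈ fNbrs F v) : v ∈ active F := mem_active.2 ⟨y, h⟩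

theorem mem_activeNbrs : x ∈ activeNbrs G F u ↔ G.Adj u x ∧ x ∈ active F := by
  simp [activeNbrs]

theorem mem_active_of_mem_activeNbrs (h : x ∈ activeNbrs G F u) : x ∈ active F :=
  (mem_activeNbrs.1 h).2

theorem mem_activeNbrs_comm (hu : u ∈ active F) (hx : x ∈ activeNbrs G F u) :
    u ∈ activeNbrs G F x :=
  mem_activeNbrs.2 ⟨(mem_activeNbrs.1 hx).1.symm, hu⟩

theorem mem_activeOfAdeg {k : ℕ} :
    v ∈ activeOfAdeg G F k ↔ v ∈ active F ∧ adeg G F v = k := by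
  simp [activeOfAdeg]

theorem adeg_le_four (hΔ : G.maxDegree ≤ 4) (u : V) : adeg G F u ≤ 4 :=
  (card_le_card inter_subset_left).trans ((G.degree_le_maxDegree u).trans hΔ)

theorem card_erase_activeNbrs (hv : v ∈ activeNbrs G F u) :
    #((activeNbrs G F u).erase v) = adeg G F u - 1 :=
  card_erase_of_mem hv

theorem one_le_adeg (hv : v ∈ activeNbrs G F u) : 1 ≤ adeg G F u := card_pos.2 ⟨v, hv⟩

theorem saturated_subset : saturated G F u v ⊆ (activeNbrs G F u).erase v := filter_subset _ _

theorem card_saturated_le (hv : v ∈ activeNbrs G F u) : #(saturated G F u v) ≤ adeg G F u - 1 :=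
  (card_le_card saturated_subset).trans (card_erase_activeNbrs hv).le

theorem card_sideEdges_le : #(sideEdges G F u v) ≤ sideWeight G F u v :=
  card_biUnion_le.trans (sum_le_sum fun _ _ => card_image_le)

theorem mem_sideEdges (hux : G.Adj u x) (hxv : x ≠ v) (hxy : s(x, y) ∈ F) (hyu : y ≠ u) :
    s(x, y) ∈ sideEdges G F u v :=
  mem_biUnion.2 ⟨x, mem_erase.2 ⟨hxv, mem_activeNbrs.2 ⟨hux, mem_active_of_mem_fNbrs
    (mem_fNbrs.2 hxy)⟩⟩, mem_image.2 ⟨y, mem_erase.2 ⟨hyu, mem_fNbrs.2 hxy⟩, rfl⟩⟩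

theorem mem_sideEdges_of_adj {f : Sym2 V} (huw : G.Adj u w) (hw : w ∈ f) (hf : f ∈ F)
    (hu : u ∉ f) (hv : v ∉ f) : f ∈ sideEdges G F u v := by
  obtain ⟨y, rfl⟩ := Sym2.mem_iff_exists.1 hw
  exact mem_sideEdges huw (by rintro rfl; exact hv hw) hf (by rintro rfl; exact hu (by simp))

theorem mem_sideEdges_union_of_sees {f : Sym2 V} (huv : u ≠ v) (hf : f ∈ F)
    (hfe : f ≠ s(u, v)) (hs : Sees G s(u, v) f) :
    f ∈ sideEdges G F u v ∪ sideEdges G F v u := by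
  rcases hs with ⟨hdisj, p, hp, q, hq, hpq⟩ | ⟨x, y, z, hxy, hyz, hxz, he, hf'⟩
  · have hu : u ∉ f := hdisj u (by simp)
    have hv : v ∉ f := hdisj v (by simp)
    rcases Sym2.mem_iff.1 hp with rfl | rfl
    · exact mem_union_left _ (mem_sideEdges_of_adj hpq hq hf hu hv)
    · exact mem_union_right _ (mem_sideEdges_of_adj hpq hq hf hv hu)
  · obtain ⟨w, huw, hvw, rfl | rfl⟩ := exists_apex_of_mem_triangle hxy hyz hxz he hf' hfe
    · rw [Sym2.eq_swap] at hf ⊢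
      exact mem_union_right _ (mem_sideEdges hvw huw.ne' hf huv)
    · rw [Sym2.eq_swap] at hf ⊢
      exact mem_union_left _ (mem_sideEdges huw hvw.ne' hf huv.symm)

theorem card_conflicts_le (hF : (F : Set (Sym2 V)) ⊆ G.edgeSet) (huv : s(u, v) ∈ F) :
    #{f ∈ F.erase s(u, v) | Sees G s(u, v) f} ≤ sideWeight G F u v + sideWeight G F v u := by
  have hsub :
      {f ∈ F.erase s(u, v) | Sees G s(u, v) f} ⊆ sideEdges G F u v ∪ sideEdges G F v u :=
    fun f hf => by
      obtain ⟨hfF, hs⟩ := mem_filter.1 hf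
      exact mem_sideEdges_union_of_sees (hF huv).ne (mem_of_mem_erase hfF) (ne_of_mem_erase hfF) hs
  exact (card_le_card hsub).trans
    ((card_union_le _ _).trans (add_le_add card_sideEdges_le card_sideEdges_le))

section EdgeSubset

variable (hF : (F : Set (Sym2 V)) ⊆ G.edgeSet)
include hF

theorem fNbrs_subset_activeNbrs : fNbrs F v ⊆ activeNbrs G F v := fun _ hy =>
  mem_activeNbrs.2 ⟨hF (mem_fNbrs.1 hy), mem_active_of_mem_fNbrs (mem_fNbrs_comm.1 hy)⟩

theorem card_fNbrs_erase_le (hu : u ∈ activeNbrs G F x) :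
    #((fNbrs F x).erase u) ≤ adeg G F x - 1 := by
  rw [adeg, ← card_erase_of_mem hu]
  exact card_le_card (erase_subset_erase u (fNbrs_subset_activeNbrs hF))

theorem card_fNbrs_erase_le_three (hΔ : G.maxDegree ≤ 4) (hu : u ∈ active F)
    (hx : x ∈ activeNbrs G F u) : #((fNbrs F x).erase u) ≤ 3 :=
  (card_fNbrs_erase_le hF (mem_activeNbrs_comm hu hx)).trans
    (by have := adeg_le_four hΔ (F := F) x; omega)

theorem isStrong_of_mem_saturated (hΔ : G.maxDegree ≤ 4) (hu : u ∈ active F)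
    (hx : x ∈ saturated G F u v) : IsStrong G F x := by
  obtain ⟨hxu, hx3⟩ := mem_filter.1 hx
  have hux := mem_activeNbrs_comm hu (mem_of_mem_erase hxu)
  have h1 := card_fNbrs_erase_le hF hux
  have h2 : #((fNbrs F x).erase u) ≤ #(fNbrs F x) := card_le_card (erase_subset u _)
  have h3 := adeg_le_four hΔ (F := F) x
  exact ⟨by omega, by omega⟩

theorem sideWeight_le (hΔ : G.maxDegree ≤ 4) (hu : u ∈ active F)
    (hv : v ∈ activeNbrs G F u) :
    sideWeight G F u v ≤ 2 * (adeg G F u - 1) + #(saturated G F u v) := by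
  rw [← card_erase_activeNbrs hv]
  exact sum_le_two_mul_card_add_card_filter_eq_three fun x hx =>
    card_fNbrs_erase_le_three hF hΔ hu (mem_of_mem_erase hx)

theorem sideWeight_le_of_mem_erase (hΔ : G.maxDegree ≤ 4) (hu : u ∈ active F)
    (hz : z ∈ activeNbrs G F u) (hv : v ∈ (activeNbrs G F u).erase z) :
    sideWeight G F u z ≤ 3 * (adeg G F u - 2) + (adeg G F v - 1) := by
  have hvu := card_fNbrs_erase_le hF (mem_activeNbrs_comm hu (mem_of_mem_erase hv))
  have hrest : ∑ x ∈ ((activeNbrs G F u).erase z).erase v, #((fNbrs F x).erase u) ≤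
      3 * (adeg G F u - 2) := by
    rw [mul_comm, ← smul_eq_mul]
    refine (sum_le_card_nsmul _ _ 3 fun x hx => card_fNbrs_erase_le_three hF hΔ hu
      (mem_of_mem_erase (mem_of_mem_erase hx))).trans ?_
    rw [card_erase_of_mem hv, card_erase_activeNbrs hz, smul_eq_mul, smul_eq_mul]
    omega
  rw [sideWeight, ← add_sum_erase _ _ hv]
  omega

end EdgeSubset

section Critical

variable (hF : (F : Set (Sym2 V)) ⊆ G.edgeSet) (hΔ : G.maxDegree ≤ 4)
  (hcrit : ∀ e ∈ F, 12 ≤ #{f ∈ F.erase e | Sees G e f})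
include hF hΔ hcrit

theorem sixteen_le_adeg_add_card_saturated (huv : s(u, v) ∈ F) :
    16 ≤ 2 * adeg G F u + 2 * adeg G F v + #(saturated G F u v) + #(saturated G F v u) := by
  have hv : v ∈ activeNbrs G F u := fNbrs_subset_activeNbrs hF (mem_fNbrs.2 huv)
  have hu : u ∈ activeNbrs G F v :=
    fNbrs_subset_activeNbrs hF (mem_fNbrs_comm.1 (mem_fNbrs.2 huv))
  have h12 := (hcrit _ huv).trans (card_conflicts_le hF huv)
  have := sideWeight_le hF hΔ (mem_active_of_mem_activeNbrs hu) hv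
  have := sideWeight_le hF hΔ (mem_active_of_mem_activeNbrs hv) hu
  have := one_le_adeg hv
  have := one_le_adeg hu
  omega

theorem two_le_adeg (hv : v ∈ active F) : 2 ≤ adeg G F v := by
  obtain ⟨u, hu⟩ : (fNbrs F v).Nonempty := mem_active.1 hv
  have hvu : v ∈ activeNbrs G F u := fNbrs_subset_activeNbrs hF (mem_fNbrs_comm.1 hu)
  have hkey := sixteen_le_adeg_add_card_saturated hF hΔ hcrit (mem_fNbrs.1 hu)
  have := card_saturated_le (fNbrs_subset_activeNbrs hF hu)
  have := card_saturated_le hvu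
  have := adeg_le_four hΔ (F := F) u
  have := one_le_adeg hvu
  omega

theorem saturated_eq_of_adeg_eq_two (hz : adeg G F z = 2) (hzu : s(z, u) ∈ F) :
    adeg G F u = 4 ∧ saturated G F u z = (activeNbrs G F u).erase z ∧
      saturated G F z u = (activeNbrs G F z).erase u := by
  have hu : u ∈ activeNbrs G F z := fNbrs_subset_activeNbrs hF (mem_fNbrs.2 hzu)
  have hz' : z ∈ activeNbrs G F u :=
    fNbrs_subset_activeNbrs hF (mem_fNbrs_comm.1 (mem_fNbrs.2 hzu))
  have hkey := sixteen_le_adeg_add_card_saturated hF hΔ hcrit hzu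
  have := card_saturated_le hu
  have := card_saturated_le hz'
  have := adeg_le_four hΔ (F := F) u
  refine ⟨by omega, eq_of_subset_of_card_le saturated_subset ?_,
    eq_of_subset_of_card_le saturated_subset ?_⟩
  · rw [card_erase_activeNbrs hz']; omega
  · rw [card_erase_activeNbrs hu]; omega

theorem isStrong_of_adeg_eq_two_of_mem (hz : adeg G F z = 2) (hzu : s(z, u) ∈ F)
    (hy : y ∈ activeNbrs G F u) (hyz : y ≠ z) : IsStrong G F y := by
  refine isStrong_of_mem_saturated hF hΔ (v := z)
    (mem_active_of_mem_fNbrs (mem_fNbrs_comm.1 (mem_fNbrs.2 hzu))) ?_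
  rw [(saturated_eq_of_adeg_eq_two hF hΔ hcrit hz hzu).2.1]
  exact mem_erase.2 ⟨hyz, hy⟩

theorem isStrong_of_adeg_eq_two_of_not_mem (hz : z ∈ active F) (hz2 : adeg G F z = 2)
    (hw : w ∈ activeNbrs G F z) (hzw : s(z, w) ∉ F) : IsStrong G F w := by
  obtain ⟨u, hu⟩ : (fNbrs F z).Nonempty := mem_active.1 hz
  refine isStrong_of_mem_saturated hF hΔ hz (v := u) ?_
  rw [(saturated_eq_of_adeg_eq_two hF hΔ hcrit hz2 (mem_fNbrs.1 hu)).2.2]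
  exact mem_erase.2 ⟨by rintro rfl; exact hzw (mem_fNbrs.1 hu), hw⟩

theorem adeg_eq_four_of_adeg_eq_two (hz : z ∈ active F) (hz2 : adeg G F z = 2)
    (hx : x ∈ activeNbrs G F z) : adeg G F x = 4 := by
  by_cases hzx : s(z, x) ∈ F
  · exact (saturated_eq_of_adeg_eq_two hF hΔ hcrit hz2 hzx).1
  · exact (isStrong_of_adeg_eq_two_of_not_mem hF hΔ hcrit hz hz2 hx hzx).2

theorem card_filter_adeg_eq_two_le_one (hx : x ∈ active F) :
    #{z ∈ activeNbrs G F x | adeg G F z = 2} ≤ 1 := by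
  by_contra! h
  obtain ⟨a, ha, b, hb, hab⟩ := one_lt_card.1 h
  obtain ⟨ha, ha2⟩ := mem_filter.1 ha
  obtain ⟨hb, hb2⟩ := mem_filter.1 hb
  have hfedge : ∀ {c d}, c ∈ activeNbrs G F x → adeg G F c = 2 → adeg G F d = 2 →
      d ∈ activeNbrs G F x → c ≠ d → s(c, x) ∉ F := fun hc hc2 hd2 hd hcd hcx => by
    have := (isStrong_of_adeg_eq_two_of_mem hF hΔ hcrit hc2 hcx hd hcd.symm).2
    omega
  have hxs := isStrong_of_adeg_eq_two_of_not_mem hF hΔ hcrit (mem_active_of_mem_activeNbrs ha) ha2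
    (mem_activeNbrs_comm hx ha) (hfedge ha ha2 hb2 hb hab)
  have hsub : fNbrs F x ⊆ ((activeNbrs G F x).erase a).erase b := fun y hy => by
    refine mem_erase.2 ⟨?_, mem_erase.2 ⟨?_, fNbrs_subset_activeNbrs hF hy⟩⟩ <;> rintro rfl
    · exact hfedge hb hb2 ha2 ha hab.symm (mem_fNbrs.1 (mem_fNbrs_comm.1 hy))
    · exact hfedge ha ha2 hb2 hb hab (mem_fNbrs.1 (mem_fNbrs_comm.1 hy))
  have := card_le_card hsub
  rw [card_erase_of_mem (mem_erase.2 ⟨hab.symm, hb⟩), card_erase_activeNbrs ha] at this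
  have := hxs.1
  have := adeg_le_four hΔ (F := F) x
  omega

theorem not_hasAdegTwoNbr_of_mem_saturated (hz : z ∈ active F) (hz3 : adeg G F z = 3)
    (hx : x ∈ saturated G F z v) : ¬HasAdegTwoNbr G F x := by
  rintro ⟨w, hw, hw2⟩
  obtain ⟨hxz, hx3⟩ := mem_filter.1 hx
  have hzx := mem_activeNbrs_comm hz (mem_of_mem_erase hxz)
  have hwz : w ≠ z := by rintro rfl; omega
  by_cases hwx : s(w, x) ∈ F
  · have := (isStrong_of_adeg_eq_two_of_mem hF hΔ hcrit hw2 hwx hzx hwz.symm).2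
    omega
  have hsub : (fNbrs F x).erase z ⊆ ((activeNbrs G F x).erase z).erase w := fun y hy => by
    obtain ⟨hyz, hy⟩ := mem_erase.1 hy
    refine mem_erase.2 ⟨?_, mem_erase.2 ⟨hyz, fNbrs_subset_activeNbrs hF hy⟩⟩
    rintro rfl
    exact hwx (mem_fNbrs.1 (mem_fNbrs_comm.1 hy))
  have := card_le_card hsub
  rw [card_erase_of_mem (mem_erase.2 ⟨hwz, hw⟩), card_erase_activeNbrs hzx] at this
  have := adeg_le_four hΔ (F := F) x
  omega

theorem saturated_subset_eligible (hz : z ∈ active F) (hz3 : adeg G F z = 3) :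
    saturated G F z v ⊆ eligible G F z := fun _ hx =>
  mem_filter.2 ⟨mem_of_mem_erase (saturated_subset hx), isStrong_of_mem_saturated hF hΔ hz hx,
    not_hasAdegTwoNbr_of_mem_saturated hF hΔ hcrit hz hz3 hx⟩

theorem fallback_nonempty (hz : z ∈ active F) (hz3 : adeg G F z = 3)
    (hel : eligible G F z = ∅) : (fallback G F z).Nonempty := by
  obtain ⟨u, hu⟩ : (fNbrs F z).Nonempty := mem_active.1 hz
  have hzu := mem_fNbrs.1 hu
  have hu' := fNbrs_subset_activeNbrs hF hu
  have hz' := mem_activeNbrs_comm hz hu'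
  have := two_le_adeg hF hΔ hcrit (mem_active_of_mem_activeNbrs hu')
  have := adeg_le_four hΔ (F := F) u
  obtain hu2 | hu3 | hu4 : adeg G F u = 2 ∨ adeg G F u = 3 ∨ adeg G F u = 4 := by omega
  · have := (saturated_eq_of_adeg_eq_two hF hΔ hcrit hu2 (mem_fNbrs.1 (mem_fNbrs_comm.1 hu))).1
    omega
  · have hsat : (saturated G F z u).Nonempty := by
      have := sixteen_le_adeg_add_card_saturated hF hΔ hcrit hzu
      have := card_saturated_le hz'
      rw [← card_pos]
      omega
    obtain ⟨y, hy⟩ := hsat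
    simpa [hel] using saturated_subset_eligible hF hΔ hcrit hz hz3 hy
  · exact ⟨u, mem_filter.2 ⟨hu, hu4⟩⟩

theorem not_isStrong_of_mem_fallback (hz : z ∈ active F) (hz3 : adeg G F z = 3)
    (hel : eligible G F z = ∅) (hu : u ∈ fallback G F z) : ¬IsStrong G F u := by
  intro hstr
  obtain ⟨hu, hu4⟩ := mem_filter.1 hu
  have hu' := fNbrs_subset_activeNbrs hF hu
  have hz' := mem_activeNbrs_comm hz hu'
  by_cases h2 : HasAdegTwoNbr G F u
  swap
  · have : u ∈ eligible G F z := mem_filter.2 ⟨hu', hstr, h2⟩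
    simp [hel] at this
  obtain ⟨v, hv, hv2⟩ := h2
  have hvz : v ≠ z := by rintro rfl; omega
  -- the side of `u` weighs at most `3 + 3 + 1`, since `v` has at most one further `F`-edge
  have hside_u := sideWeight_le_of_mem_erase hF hΔ (mem_active_of_mem_activeNbrs hu') hz'
    (mem_erase.2 ⟨hvz, hv⟩)
  have hside_z := sideWeight_le hF hΔ hz hu'
  have hsat : saturated G F z u = ∅ :=
    subset_empty.1 (hel ▸ saturated_subset_eligible hF hΔ hcrit hz hz3)
  have hconf := (hcrit _ (mem_fNbrs.1 hu)).trans (card_conflicts_le hF (mem_fNbrs.1 hu))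
  rw [hsat, card_empty] at hside_z
  omega

theorem not_hasAdegTwoNbr_of_mem_fallback (hz : z ∈ active F) (hz3 : adeg G F z = 3)
    (hel : eligible G F z = ∅) (hu : u ∈ fallback G F z) : ¬HasAdegTwoNbr G F u := by
  rintro ⟨v, hv, hv2⟩
  have hu' := fNbrs_subset_activeNbrs hF (mem_filter.1 hu).1
  have hvz : v ≠ z := by rintro rfl; omega
  by_cases hvu : s(v, u) ∈ F
  · have := (isStrong_of_adeg_eq_two_of_mem hF hΔ hcrit hv2 hvu (mem_activeNbrs_comm hz hu')
      hvz.symm).2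
    omega
  exact not_isStrong_of_mem_fallback hF hΔ hcrit hz hz3 hel hu
    (isStrong_of_adeg_eq_two_of_not_mem hF hΔ hcrit (mem_active_of_mem_activeNbrs hv) hv2
      (mem_activeNbrs_comm (mem_active_of_mem_activeNbrs hu') hv) hvu)

theorem targets_nonempty (hz : z ∈ active F) (hz3 : adeg G F z = 3) :
    (targets G F z).Nonempty := by
  unfold targets
  split_ifs with h
  · exact h
  · exact fallback_nonempty hF hΔ hcrit hz hz3 (not_nonempty_iff_eq_empty.1 h)

theorem not_hasAdegTwoNbr_of_mem_targets (hz : z ∈ active F) (hz3 : adeg G F z = 3)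
    (hx : x ∈ targets G F z) : ¬HasAdegTwoNbr G F x := by
  unfold targets at hx
  split_ifs at hx with h
  · exact (mem_filter.1 hx).2.2
  · exact not_hasAdegTwoNbr_of_mem_fallback hF hΔ hcrit hz hz3 (not_nonempty_iff_eq_empty.1 h) hx

theorem mem_targets_iff_of_isStrong (hz : z ∈ active F) (hz3 : adeg G F z = 3)
    (hx : IsStrong G F x) : x ∈ targets G F z ↔ x ∈ eligible G F z := by
  unfold targets
  split_ifs with h
  · rfl
  · rw [not_nonempty_iff_eq_empty.1 h]
    simpa using fun hxf =>
      not_isStrong_of_mem_fallback hF hΔ hcrit hz hz3 (not_nonempty_iff_eq_empty.1 h) hxf hx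

end Critical

theorem eligibleFor_subset : eligibleFor G F x ⊆ activeOfAdeg G F 3 := filter_subset _ _

theorem eligibleFor_subset_activeNbrs :
    eligibleFor G F x ⊆ activeNbrs G F x := fun z hz => by
  obtain ⟨hz, hxz⟩ := mem_filter.1 hz
  exact mem_activeNbrs_comm (mem_activeOfAdeg.1 hz).1 (mem_filter.1 hxz).1

theorem targets_subset_activeOfAdeg_four : targets G F z ⊆ activeOfAdeg G F 4 := by
  unfold targets
  split_ifs
  · exact fun x hx => mem_activeOfAdeg.2
      ⟨mem_active_of_mem_activeNbrs (mem_filter.1 hx).1, (mem_filter.1 hx).2.1.2⟩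
  · exact fun u hu => mem_activeOfAdeg.2
      ⟨mem_active_of_mem_fNbrs (mem_fNbrs_comm.1 (mem_filter.1 hu).1), (mem_filter.1 hu).2⟩

theorem mem_fNbrs_of_mem_targets (hx : ¬IsStrong G F x) (hxz : x ∈ targets G F z) :
    z ∈ fNbrs F x := by
  unfold targets at hxz
  split_ifs at hxz
  · exact absurd (mem_filter.1 hxz).2.1 hx
  · exact mem_fNbrs_comm.1 (mem_filter.1 hxz).1

theorem sum_share_eq_one (hz : (targets G F z).Nonempty) :
    ∑ x ∈ activeOfAdeg G F 4, share G F z x = 1 := by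
  simp only [share]
  rw [sum_ite_mem, inter_eq_right.2 targets_subset_activeOfAdeg_four, sum_const,
    nsmul_eq_mul, mul_inv_cancel₀ (by exact_mod_cast hz.card_pos.ne')]

theorem sum_share_le_two_of_not_isStrong (hx4 : adeg G F x = 4) (hx : ¬IsStrong G F x) :
    ∑ z ∈ activeOfAdeg G F 3, share G F z x ≤ 2 := by
  have hshare : ∀ z ∈ activeOfAdeg G F 3, share G F z x ≤ if z ∈ fNbrs F x then 1 else 0 :=
    fun z _ => by
      unfold share
      split_ifs with h1 h2
      · exact inv_le_one_of_one_le₀ (by exact_mod_cast card_pos.2 ⟨x, h1⟩)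
      · exact absurd (mem_fNbrs_of_mem_targets hx h1) h2
      · exact zero_le_one
      · exact le_rfl
  have hcard : #(fNbrs F x) ≤ 2 := by
    by_contra! h
    exact hx ⟨by omega, hx4⟩
  calc ∑ z ∈ activeOfAdeg G F 3, share G F z x
      ≤ ∑ z ∈ activeOfAdeg G F 3, if z ∈ fNbrs F x then (1 : ℚ) else 0 :=
        sum_le_sum hshare
    _ = #{z ∈ activeOfAdeg G F 3 | z ∈ fNbrs F x} := by rw [sum_boole]
    _ ≤ 2 := by
      exact_mod_cast (card_le_card fun z hz => (mem_filter.1 hz).2).trans hcard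

theorem card_eligibleFor_le_card_filter_add_one (hF : (F : Set (Sym2 V)) ⊆ G.edgeSet)
    (hx : IsStrong G F x) :
    #(eligibleFor G F x) ≤ #{z ∈ eligibleFor G F x | z ∈ fNbrs F x} + 1 := by
  have hsub : {z ∈ eligibleFor G F x | z ∉ fNbrs F x} ⊆ activeNbrs G F x \ fNbrs F x :=
    fun z hz => mem_sdiff.2 ⟨eligibleFor_subset_activeNbrs (mem_filter.1 hz).1,
      (mem_filter.1 hz).2⟩
  have h1 := card_le_card hsub
  rw [card_sdiff_of_subset (fNbrs_subset_activeNbrs hF)] at h1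
  have := card_filter_add_card_filter_not (s := eligibleFor G F x) (fun z => z ∈ fNbrs F x)
  have hx4 : #(activeNbrs G F x) = 4 := hx.2
  have := hx.1
  omega

section Counting

variable (hF : (F : Set (Sym2 V)) ⊆ G.edgeSet) (hΔ : G.maxDegree ≤ 4)
  (hcrit : ∀ e ∈ F, 12 ≤ #{f ∈ F.erase e | Sees G e f})
include hF hΔ hcrit

theorem card_eligibleFor_le_card_eligible_add_one (hxa : x ∈ active F) (hx : IsStrong G F x)
    (hz : z ∈ eligibleFor G F x) (hzx : z ∈ fNbrs F x) :
    #(eligibleFor G F x) ≤ #(eligible G F z) + 1 := by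
  obtain ⟨hz', hxz⟩ := mem_filter.1 hz
  obtain ⟨hzA, hz3⟩ := mem_activeOfAdeg.1 hz'
  have hzx' := eligibleFor_subset_activeNbrs hz
  have hkey := sixteen_le_adeg_add_card_saturated hF hΔ hcrit (mem_fNbrs.1 hzx)
  -- members of `eligibleFor x` are 3-vertices, so none is saturated from `x`; this leaves
  -- room on the side of `x` only if `z` has many saturated, hence eligible, neighbours
  have hdisj : Disjoint (saturated G F x z) ((eligibleFor G F x).erase z) :=
    disjoint_left.2 fun y hy hy' => by
      have := (isStrong_of_mem_saturated hF hΔ hxa hy).2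
      have := (mem_activeOfAdeg.1 (eligibleFor_subset (mem_of_mem_erase hy'))).2
      omega
  have hunion : saturated G F x z ∪ (eligibleFor G F x).erase z ⊆ (activeNbrs G F x).erase z :=
    union_subset saturated_subset (erase_subset_erase z eligibleFor_subset_activeNbrs)
  have hins : insert x (saturated G F z x) ⊆ eligible G F z :=
    insert_subset hxz (saturated_subset_eligible hF hΔ hcrit hzA hz3)
  have hcard_x := card_le_card hunion
  have hcard_z := card_le_card hins
  rw [card_union_of_disjoint hdisj, card_erase_of_mem hz, card_erase_activeNbrs hzx'] at hcard_x
  rw [card_insert_of_notMem fun h => (mem_erase.1 (saturated_subset h)).1 rfl] at hcard_z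
  have := hx.2
  have := card_pos.2 ⟨z, hz⟩
  omega

theorem sum_share_le_two_of_isStrong (hxa : x ∈ active F) (hx : IsStrong G F x) :
    ∑ z ∈ activeOfAdeg G F 3, share G F z x ≤ 2 := by
  have hshare : ∀ z ∈ activeOfAdeg G F 3, share G F z x =
      if z ∈ eligibleFor G F x then (#(eligible G F z) : ℚ)⁻¹ else 0 := fun z hz => by
    obtain ⟨hzA, hz3⟩ := mem_activeOfAdeg.1 hz
    by_cases hxz : x ∈ eligible G F z
    · have : targets G F z = eligible G F z := if_pos ⟨x, hxz⟩
      simp [share, eligibleFor, hz, hxz, this]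
    · simp [share, eligibleFor, hxz, mem_targets_iff_of_isStrong hF hΔ hcrit hzA hz3 hx]
  rw [sum_congr rfl hshare, sum_ite_mem, inter_eq_right.2 eligibleFor_subset]
  exact sum_inv_le_two (filter_subset _ _)
    (card_eligibleFor_le_card_filter_add_one hF hx)
    (fun z hz => card_pos.2 ⟨x, (mem_filter.1 hz).2⟩)
    (fun z hz => card_eligibleFor_le_card_eligible_add_one hF hΔ hcrit hxa hx
      (mem_filter.1 hz).1 (mem_filter.1 hz).2)

theorem charge_le_two (hx : x ∈ activeOfAdeg G F 4) :
    2 * (#{z ∈ activeOfAdeg G F 2 | G.Adj x z} : ℚ) +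
      ∑ z ∈ activeOfAdeg G F 3, share G F z x ≤ 2 := by
  obtain ⟨hxa, hx4⟩ := mem_activeOfAdeg.1 hx
  have hsub :
      {z ∈ activeOfAdeg G F 2 | G.Adj x z} ⊆ {z ∈ activeNbrs G F x | adeg G F z = 2} :=
    fun z hz => by
      obtain ⟨hz, hxz⟩ := mem_filter.1 hz
      obtain ⟨hzA, hz2⟩ := mem_activeOfAdeg.1 hz
      exact mem_filter.2 ⟨mem_activeNbrs.2 ⟨hxz, hzA⟩, hz2⟩
  by_cases htwo : HasAdegTwoNbr G F x
  · have hle : (#{z ∈ activeOfAdeg G F 2 | G.Adj x z} : ℚ) ≤ 1 := by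
      exact_mod_cast (card_le_card hsub).trans (card_filter_adeg_eq_two_le_one hF hΔ hcrit hxa)
    have hzero : ∑ z ∈ activeOfAdeg G F 3, share G F z x = 0 := sum_eq_zero fun z hz => by
      obtain ⟨hzA, hz3⟩ := mem_activeOfAdeg.1 hz
      exact if_neg fun hxz => not_hasAdegTwoNbr_of_mem_targets hF hΔ hcrit hzA hz3 hxz htwo
    linarith
  have hempty : {z ∈ activeOfAdeg G F 2 | G.Adj x z} = ∅ :=
    eq_empty_of_forall_notMem fun z hz => htwo ⟨z, mem_filter.1 (hsub hz)⟩
  rw [hempty, card_empty, Nat.cast_zero, mul_zero, zero_add]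
  by_cases hs : IsStrong G F x
  · exact sum_share_le_two_of_isStrong hF hΔ hcrit hxa hs
  · exact sum_share_le_two_of_not_isStrong hx4 hs

theorem filter_adj_eq_activeNbrs (hz : z ∈ activeOfAdeg G F 2) :
    {x ∈ activeOfAdeg G F 4 | G.Adj x z} = activeNbrs G F z := by
  obtain ⟨hzA, hz2⟩ := mem_activeOfAdeg.1 hz
  ext x
  simp only [mem_filter, mem_activeOfAdeg, mem_activeNbrs]
  refine ⟨fun ⟨⟨hxA, _⟩, hxz⟩ => ⟨hxz.symm, hxA⟩,
    fun ⟨hzx, hxA⟩ => ⟨⟨hxA, ?_⟩, hzx.symm⟩⟩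
  exact adeg_eq_four_of_adeg_eq_two hF hΔ hcrit hzA hz2 (mem_activeNbrs.2 ⟨hzx, hxA⟩)

theorem four_mul_card_add_card_le :
    4 * (#(activeOfAdeg G F 2) : ℚ) + #(activeOfAdeg G F 3) ≤ 2 * #(activeOfAdeg G F 4) := by
  have htwo : ∑ x ∈ activeOfAdeg G F 4, #{z ∈ activeOfAdeg G F 2 | G.Adj x z} =
      2 * #(activeOfAdeg G F 2) := by
    have := sum_card_bipartiteAbove_eq_sum_card_bipartiteBelow (s := activeOfAdeg G F 4)
      (t := activeOfAdeg G F 2) (r := G.Adj)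
    simp only [bipartiteAbove, bipartiteBelow] at this
    rw [this, sum_const_nat fun z hz => ?_, mul_comm]
    rw [filter_adj_eq_activeNbrs hF hΔ hcrit hz]
    exact (mem_activeOfAdeg.1 hz).2
  have hthree : ∑ x ∈ activeOfAdeg G F 4, ∑ z ∈ activeOfAdeg G F 3, share G F z x =
      #(activeOfAdeg G F 3) := by
    rw [sum_comm, sum_congr rfl fun z hz => sum_share_eq_one
      (targets_nonempty hF hΔ hcrit (mem_activeOfAdeg.1 hz).1 (mem_activeOfAdeg.1 hz).2)]
    simp
  calc 4 * (#(activeOfAdeg G F 2) : ℚ) + #(activeOfAdeg G F 3)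
      = ∑ x ∈ activeOfAdeg G F 4, (2 * (#{z ∈ activeOfAdeg G F 2 | G.Adj x z} : ℚ) +
          ∑ z ∈ activeOfAdeg G F 3, share G F z x) := by
        rw [sum_add_distrib, ← mul_sum, hthree, ← Nat.cast_sum, htwo]
        push_cast
        ring
    _ ≤ ∑ _x ∈ activeOfAdeg G F 4, (2 : ℚ) :=
        sum_le_sum fun x hx => charge_le_two hF hΔ hcrit hx
    _ = 2 * #(activeOfAdeg G F 4) := by simp [mul_comm]

theorem adeg_mem (hv : v ∈ active F) : adeg G F v ∈ ({2, 3, 4} : Finset ℕ) := by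
  have := two_le_adeg hF hΔ hcrit hv
  have := adeg_le_four hΔ (F := F) v
  simp only [mem_insert, mem_singleton]
  omega

theorem card_active_eq :
    #(active F) = #(activeOfAdeg G F 2) + #(activeOfAdeg G F 3) + #(activeOfAdeg G F 4) := by
  rw [card_eq_sum_card_fiberwise fun v hv => adeg_mem hF hΔ hcrit hv]
  simp [activeOfAdeg, add_assoc]

theorem sum_adeg_eq : ∑ v ∈ active F, adeg G F v =
    2 * #(activeOfAdeg G F 2) + 3 * #(activeOfAdeg G F 3) + 4 * #(activeOfAdeg G F 4) := by
  have hk : ∀ k, ∑ v ∈ active F with adeg G F v = k, adeg G F v =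
      k * #{v ∈ active F | adeg G F v = k} := fun k => by
    rw [sum_const_nat fun v hv => (mem_filter.1 hv).2, mul_comm]
  rw [← sum_fiberwise_of_maps_to fun v hv => adeg_mem hF hΔ hcrit hv]
  simp [activeOfAdeg, hk, add_assoc]

theorem not_madLt (hne : F.Nonempty) : ¬MadLt G (33 / 10) := by
  intro hmad
  obtain ⟨e, he⟩ := hne
  have hA : (active F).Nonempty := by
    induction e using Sym2.ind with
    | _ a b => exact ⟨a, mem_active_of_mem_fNbrs (mem_fNbrs.2 he)⟩
  have hlt := hmad (active F) hA
  have hsum : ((∑ v ∈ active F, adeg G F v : ℕ) : ℚ) =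
      2 * ({e ∈ G.edgeSet | ∀ x ∈ e, x ∈ active F}.ncard : ℚ) := by
    exact_mod_cast sum_card_neighborFinset_inter G (active F)
  rw [← hsum, sum_adeg_eq hF hΔ hcrit, card_active_eq hF hΔ hcrit] at hlt
  have := four_mul_card_add_card_le hF hΔ hcrit
  push_cast at hlt
  linarith

end Counting

theorem exists_mem_card_conflicts_lt (hF : (F : Set (Sym2 V)) ⊆ G.edgeSet)
    (hΔ : G.maxDegree ≤ 4) (hmad : MadLt G (33 / 10)) (hne : F.Nonempty) :
    ∃ e ∈ F, #{f ∈ F.erase e | Sees G e f} < 12 := by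
  by_contra! hcrit
  exact not_madLt hF hΔ hcrit hne hmad

end InjectiveEdgeColoring

theorem stmt_17 {V : Type} [Fintype V] (G : SimpleGraph V) [DecidableRel G.Adj]
    (hΔ : G.maxDegree = 4) (hmad : MadLt G (33/10 : ℚ)) :
    injChromIndex G ≤ 12 := by
  classical
  obtain ⟨φ, hφ⟩ := exists_coloring_of_forall_exists_card_lt (fun _ _ => Sees.symm) (k := 12)
    G.edgeFinset fun F hF hne => InjectiveEdgeColoring.exists_mem_card_conflicts_lt
      (fun e he => G.mem_edgeFinset.1 (hF he)) hΔ.le hmad hne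
  exact Nat.sInf_le ⟨fun e => φ e, fun e e' hne hs => hφ e (by simp) e' (by simp) hne hs⟩
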